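/- arXiv:2603.10957 — 5 statements merged into one kernel-verified Lean document; each statement's English description precedes it below -/
import Mathlib

section
/- Every unital star-algebra homomorphism Ψ : C(Y, ℂ) → C(X, ℂ) between algebras of continuous functions on compact Hausdorff spaces is of the form g ↦ g ∘ f for a unique continuous map f : X → Y. -/
/-!
A point `x : X` gives the character `g ↦ Ψ g x` of `C(Y, ℂ)`; by Gelfand duality every character
of `C(Y, ℂ)` is evaluation at a unique point of `Y`, and the continuous map `f` sends `x` to that
point. Uniqueness holds because continuous scalar functions separate the points of `Y`.
-/

namespace ContinuousMap

open WeakDual CharacterSpace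

variable {X Y 𝕜 : Type*} [RCLike 𝕜] [TopologicalSpace X] [CompactSpace X] [T2Space X]
  [TopologicalSpace Y] [CompactSpace Y] [T2Space Y]

theorem eq_of_forall_rclike_apply_eq {y y' : Y} (h : ∀ g : C(Y, 𝕜), g y = g y') : y = y' :=
  (homeoEval Y 𝕜).injective <| CharacterSpace.ext h

noncomputable def ofStarAlgHom (Ψ : C(Y, 𝕜) →⋆ₐ[𝕜] C(X, 𝕜)) : C(X, Y) :=
  ((homeoEval Y 𝕜).symm : C(_, _)).comp <| (compContinuousMap Ψ).comp (homeoEval X 𝕜)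

theorem apply_ofStarAlgHom (Ψ : C(Y, 𝕜) →⋆ₐ[𝕜] C(X, 𝕜)) (g : C(Y, 𝕜)) (x : X) :
    g (ofStarAlgHom Ψ x) = Ψ g x :=
  congrArg (· g) <| (homeoEval Y 𝕜).apply_symm_apply (compContinuousMap Ψ (homeoEval X 𝕜 x))

end ContinuousMap

theorem stmt_4 {X Y : Type*} [TopologicalSpace X] [CompactSpace X] [T2Space X]
    [TopologicalSpace Y] [CompactSpace Y] [T2Space Y]
    (Ψ : C(Y, ℂ) →⋆ₐ[ℂ] C(X, ℂ)) :
    ∃! f : C(X, Y), ∀ g : C(Y, ℂ), Ψ g = g.comp f := by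
  refine ⟨ContinuousMap.ofStarAlgHom Ψ,
    fun g => ContinuousMap.ext fun x => (ContinuousMap.apply_ofStarAlgHom Ψ g x).symm, ?_⟩
  intro f hf
  ext x
  refine ContinuousMap.eq_of_forall_rclike_apply_eq (𝕜 := ℂ) fun g => ?_
  rw [ContinuousMap.apply_ofStarAlgHom, hf, ContinuousMap.comp_apply]
end

section
/- Let X be a locally compact Hausdorff space and g : X → ℂ a function such that g·f is continuous and vanishes at infinity for every f in C₀(X, ℂ). Then g is continuous and bounded. -/
open Set Filter Topology ZeroAtInftyContinuousMap

theorem stmt_10 {X : Type*} [TopologicalSpace X] [LocallyCompactSpace X] [T2Space X]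
    (g : X → ℂ)
    (hg : ∀ f : ZeroAtInftyContinuousMap X ℂ, ∃ h : ZeroAtInftyContinuousMap X ℂ, ∀ x, h x = g x * f x) :
    Continuous g ∧ ∃ C : ℝ, ∀ x, ‖g x‖ ≤ C := by
  classical
  -- a bump in C₀ equal to 1 on any compact set, with values of norm ≤ 1
  have key : ∀ K : Set X, IsCompact K → ∃ F : ZeroAtInftyContinuousMap X ℂ,
      (∀ y ∈ K, F y = 1) ∧ ∀ y, ‖F y‖ ≤ 1 := by
    intro K hK
    obtain ⟨f, hf1, hf0, hfc, hf01⟩ :=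
      exists_continuous_one_zero_of_isCompact hK isClosed_empty (by simp)
    have hcs : HasCompactSupport (fun y => (f y : ℂ)) :=
      hfc.comp_left (g := Complex.ofReal) Complex.ofReal_zero
    refine ⟨⟨⟨fun y => (f y : ℂ), by continuity⟩, hcs.is_zero_at_infty⟩, ?_, ?_⟩
    · intro y hy
      show ((f y : ℝ) : ℂ) = 1
      rw [hf1 hy]
      norm_num
    · intro y
      have := hf01 y
      show ‖((f y : ℝ) : ℂ)‖ ≤ 1
      rw [Complex.norm_real, Real.norm_eq_abs, abs_of_nonneg this.1]
      exact this.2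
  -- continuity
  have hcont : Continuous g := by
    rw [continuous_iff_continuousAt]
    intro x
    obtain ⟨K, hKc, hKn⟩ := exists_compact_mem_nhds x
    obtain ⟨F, hF1, _⟩ := key K hKc
    obtain ⟨h, hh⟩ := hg F
    have hev : (h : X → ℂ) =ᶠ[𝓝 x] g := by
      filter_upwards [hKn] with y hy
      rw [hh y, hF1 y hy, mul_one]
    exact (map_continuous h).continuousAt.congr hev
  refine ⟨hcont, ?_⟩
  -- the multiplication operator
  have hT0 : ∀ f : ZeroAtInftyContinuousMap X ℂ, ∀ x, (hg f).choose x = g x * f x :=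
    fun f => (hg f).choose_spec
  let T : ZeroAtInftyContinuousMap X ℂ →ₗ[ℂ] ZeroAtInftyContinuousMap X ℂ :=
    { toFun := fun f => (hg f).choose
      map_add' := by
        intro f f'
        ext x
        rw [ZeroAtInftyContinuousMap.add_apply, hT0 (f + f') x, hT0 f x, hT0 f' x,
          ZeroAtInftyContinuousMap.add_apply, mul_add]
      map_smul' := by
        intro c f
        ext x
        rw [RingHom.id_apply, ZeroAtInftyContinuousMap.smul_apply, hT0 (c • f) x, hT0 f x,
          ZeroAtInftyContinuousMap.smul_apply, smul_eq_mul, smul_eq_mul]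
        ring }
  have hTc : Continuous T := by
    apply T.continuous_of_seq_closed_graph
    intro u x y hu hy
    ext p
    have h1 : Tendsto (fun n => (T (u n)) p) atTop (𝓝 (y p)) :=
      (tendsto_iff_tendstoUniformly.mp hy).tendsto_at p
    have h2 : Tendsto (fun n => (u n) p) atTop (𝓝 (x p)) :=
      (tendsto_iff_tendstoUniformly.mp hu).tendsto_at p
    have h3 : Tendsto (fun n => (T (u n)) p) atTop (𝓝 (g p * x p)) := by
      have : (fun n => (T (u n)) p) = fun n => g p * (u n) p := by
        funext n; exact hT0 (u n) p
      rw [this]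
      exact h2.const_mul _
    have := tendsto_nhds_unique h1 h3
    rw [this]
    exact (hT0 x p).symm
  let T' : ZeroAtInftyContinuousMap X ℂ →L[ℂ] ZeroAtInftyContinuousMap X ℂ := ⟨T, hTc⟩
  refine ⟨‖T'‖, fun x => ?_⟩
  obtain ⟨F, hF1, hFle⟩ := key {x} isCompact_singleton
  have hFnorm : ‖F‖ ≤ 1 := by
    rw [← norm_toBCF_eq_norm]
    exact (BoundedContinuousFunction.norm_le zero_le_one).mpr hFle
  calc ‖g x‖ = ‖(T' F) x‖ := by
        show ‖g x‖ = ‖(hg F).choose x‖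
        rw [hT0 F x, hF1 x rfl, mul_one]
    _ ≤ ‖T' F‖ := by
        rw [← norm_toBCF_eq_norm]
        exact (T' F).toBCF.norm_coe_le_norm x
    _ ≤ ‖T'‖ * ‖F‖ := T'.le_opNorm F
    _ ≤ ‖T'‖ * 1 := by
        exact mul_le_mul_of_nonneg_left hFnorm (norm_nonneg T')
    _ = ‖T'‖ := mul_one _
end

section
/- Let X be a locally compact Hausdorff space and g : X → ℂ a continuous unbounded function. Then there exists f in C₀(X, ℂ) such that the product f·g is unbounded. -/
/-!
Pick points `xₙ` with `‖g xₙ‖ > 2ⁿ n` and bumps `bₙ ∈ C₀(X, ℝ)` with `0 ≤ bₙ ≤ 1`, `bₙ xₙ = 1`.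
The series `f = ∑ 2⁻ⁿ bₙ` converges in the Banach space `C₀(X, ℝ)`, and since all terms are
nonnegative, `f xₙ ≥ 2⁻ⁿ`; hence `‖f g‖ ≥ n` at `xₙ`.
-/

open scoped ZeroAtInfty

namespace ZeroAtInftyContinuousMap

variable {X : Type*} [TopologicalSpace X]

instance {β : Type*} [PseudoMetricSpace β] [Zero β] : ContinuousEvalConst C₀(X, β) X β where
  continuous_eval_const x :=
    (continuous_eval_const (F := BoundedContinuousFunction X β) x).comp isometry_toBCF.continuous

theorem hasSum_apply {ι β : Type*} [PseudoMetricSpace β] [AddCommMonoid β] [ContinuousAdd β]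
    {F : ι → C₀(X, β)} {f : C₀(X, β)} (hF : HasSum F f) (x : X) :
    HasSum (fun i => F i x) (f x) :=
  hF.map (⟨⟨fun f : C₀(X, β) => f x, rfl⟩, fun _ _ => rfl⟩ : C₀(X, β) →+ β)
    (continuous_eval_const x)

theorem exists_apply_eq_one_nonneg_norm_le_one [LocallyCompactSpace X] [T2Space X] (x : X) :
    ∃ b : C₀(X, ℝ), b x = 1 ∧ (∀ y, 0 ≤ b y) ∧ ‖b‖ ≤ 1 := by
  obtain ⟨b, hb1, -, hbc, hb01⟩ :=
    exists_continuous_one_zero_of_isCompact isCompact_singleton isClosed_empty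
      (Set.disjoint_empty {x})
  refine ⟨⟨b, hbc.is_zero_at_infty⟩, hb1 rfl, fun y => (hb01 y).1, ?_⟩
  rw [← norm_toBCF_eq_norm, BoundedContinuousFunction.norm_le zero_le_one]
  exact fun y => (Real.norm_of_nonneg (hb01 y).1).trans_le (hb01 y).2

theorem exists_nonneg_forall_le_apply [LocallyCompactSpace X] [T2Space X] {ι : Type*}
    (x : ι → X) {c : ι → ℝ} (hc0 : ∀ i, 0 ≤ c i) (hc : Summable c) :
    ∃ f : C₀(X, ℝ), (∀ y, 0 ≤ f y) ∧ ∀ i, c i ≤ f (x i) := by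
  choose b hb1 hb0 hb using fun i => exists_apply_eq_one_nonneg_norm_le_one (x i)
  have hnorm (i : ι) : ‖c i • b i‖ ≤ c i := by
    rw [norm_smul, Real.norm_of_nonneg (hc0 i)]
    exact mul_le_of_le_one_right (hc0 i) (hb i)
  have hsum := (hc.of_norm_bounded hnorm).hasSum
  have hterm_nonneg (i : ι) (y : X) : 0 ≤ (c i • b i) y := mul_nonneg (hc0 i) (hb0 i y)
  refine ⟨∑' i, c i • b i, fun y => (hasSum_apply hsum y).nonneg (hterm_nonneg · y),
    fun i => ?_⟩
  calc c i = (c i • b i) (x i) := by simp [hb1 i]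
    _ ≤ _ := le_hasSum (hasSum_apply hsum (x i)) i fun j _ => hterm_nonneg j (x i)

def ofReal (f : C₀(X, ℝ)) : C₀(X, ℂ) where
  toFun y := f y
  continuous_toFun := Complex.continuous_ofReal.comp f.continuous
  zero_at_infty' := by
    simpa [Function.comp_def] using (Complex.continuous_ofReal.tendsto 0).comp (zero_at_infty f)

theorem ofReal_apply (f : C₀(X, ℝ)) (y : X) : ofReal f y = f y := rfl

end ZeroAtInftyContinuousMap

theorem stmt_11_general {X : Type*} [TopologicalSpace X] [LocallyCompactSpace X] [T2Space X]
    (g : X → ℂ) (hgu : ¬∃ C : ℝ, ∀ x, ‖g x‖ ≤ C) :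
    ∃ f : ZeroAtInftyContinuousMap X ℂ, ¬∃ C : ℝ, ∀ x, ‖f x * g x‖ ≤ C := by
  push Not at hgu
  choose x hx using fun n : ℕ => hgu (2 ^ n * n)
  obtain ⟨f, hf0, hf⟩ := ZeroAtInftyContinuousMap.exists_nonneg_forall_le_apply x
    (fun n => by positivity) summable_geometric_two
  refine ⟨f.ofReal, fun ⟨C, hC⟩ => ?_⟩
  have hlarge (n : ℕ) : (n : ℝ) ≤ ‖f.ofReal (x n) * g (x n)‖ :=
    calc (n : ℝ) = (1 / 2) ^ n * (2 ^ n * n) := by rw [← mul_assoc, ← mul_pow]; norm_num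
      _ ≤ f (x n) * ‖g (x n)‖ := mul_le_mul (hf n) (hx n).le (by positivity) (hf0 _)
      _ = ‖f.ofReal (x n) * g (x n)‖ := by
        rw [norm_mul, f.ofReal_apply, Complex.norm_real, Real.norm_of_nonneg (hf0 _)]
  obtain ⟨n, hn⟩ := exists_nat_gt C
  exact (hn.trans_le (hlarge n)).not_ge (hC (x n))

theorem stmt_11 {X : Type*} [TopologicalSpace X] [LocallyCompactSpace X] [T2Space X]
    (g : X → ℂ) (hgc : Continuous g) (hgu : ¬∃ C : ℝ, ∀ x, ‖g x‖ ≤ C) :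
    ∃ f : ZeroAtInftyContinuousMap X ℂ, ¬∃ C : ℝ, ∀ x, ‖f x * g x‖ ≤ C :=
  stmt_11_general g hgu
end

section
/- Every Peano continuum (compact, connected, locally connected metric space) is a continuous image of [0,1]. -/
set_option linter.unusedSectionVars false
set_option maxHeartbeats 1000000

open Metric Set Filter Topology

section HM

variable {X : Type*} [MetricSpace X]

/-- Chain lemma: in a preconnected set, any two points are joined by an
eventually-constant η-chain inside the set. -/
lemma hm_chain {S : Set X} (hS : IsPreconnected S) {x y : X} (hx : x ∈ S) (hy : y ∈ S)
    {η : ℝ} (hη : 0 < η) :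
    ∃ (c : ℕ → X) (K : ℕ), c 0 = x ∧ (∀ r, K ≤ r → c r = y) ∧
      (∀ r, dist (c r) (c (r + 1)) < η) ∧ (∀ r, c r ∈ S) := by
  set T : Set X := {z | ∃ (c : ℕ → X) (K : ℕ), c 0 = x ∧ (∀ r, K ≤ r → c r = z) ∧
      (∀ r, dist (c r) (c (r + 1)) < η) ∧ (∀ r, c r ∈ S)} with hT
  have hxT : x ∈ T := ⟨fun _ => x, 0, rfl, fun _ _ => rfl, fun _ => by simpa using hη,
    fun _ => hx⟩
  have hext : ∀ z ∈ T, ∀ w ∈ S, dist z w < η → w ∈ T := by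
    rintro z ⟨c, K, hc0, hcK, hcm, hcS⟩ w hw hzw
    refine ⟨fun r => if r ≤ K then c r else w, K + 1, by simp [hc0], ?_, ?_, ?_⟩
    · intro r hr
      have : ¬ r ≤ K := by omega
      simp [this]
    · intro r
      rcases lt_trichotomy r K with h | h | h
      · simp only [h.le, if_pos, show r + 1 ≤ K by omega]
        exact hcm r
      · subst h
        simp only [le_refl, if_pos, show ¬ (r + 1 ≤ r) by omega, if_neg]
        rw [hcK r le_rfl]
        exact hzw
      · simp only [show ¬ (r ≤ K) by omega, if_neg, show ¬ (r + 1 ≤ K) by omega]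
        simpa using hη
    · intro r
      by_cases h : r ≤ K <;> simp [h, hcS r, hw]
  by_contra hyT
  have hyT' : y ∉ T := fun h => hyT (by
    obtain ⟨c, K, h1, h2, h3, h4⟩ := h
    exact ⟨c, K, h1, h2, h3, h4⟩)
  set U : Set X := ⋃ z ∈ T, ball z η
  set V : Set X := ⋃ z ∈ S \ T, ball z η
  have hU : IsOpen U := isOpen_biUnion fun _ _ => isOpen_ball
  have hV : IsOpen V := isOpen_biUnion fun _ _ => isOpen_ball
  have hcov : S ⊆ U ∪ V := by
    intro s hs
    by_cases h : s ∈ T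
    · exact Or.inl (mem_biUnion h (mem_ball_self hη))
    · exact Or.inr (mem_biUnion ⟨hs, h⟩ (mem_ball_self hη))
  have hUne : (S ∩ U).Nonempty := ⟨x, hx, mem_biUnion hxT (mem_ball_self hη)⟩
  have hVne : (S ∩ V).Nonempty := ⟨y, hy, mem_biUnion ⟨hy, hyT'⟩ (mem_ball_self hη)⟩
  obtain ⟨s, hsS, hsU, hsV⟩ := hS U V hU hV hcov hUne hVne
  obtain ⟨z, hzT, hsz⟩ := by simpa [U, mem_iUnion] using hsU
  obtain ⟨w, ⟨hwS, hwT⟩, hsw⟩ := by simpa [V, mem_iUnion] using hsV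
  have hsT : s ∈ T := hext z hzT s hsS (by rwa [dist_comm])
  exact hwT (hext s hsT w hwS hsw)

variable [CompactSpace X] [LocallyConnectedSpace X]

/-- Key uniform lemma: for every `ε > 0` there is `0 < δ ≤ ε` such that any two
`δ`-close points can be joined by chains of arbitrarily small mesh staying `ε`-close
to the first point. -/
lemma hm_key (ε : ℝ) (hε : 0 < ε) :
    ∃ δ : ℝ, 0 < δ ∧ δ ≤ ε ∧ ∀ x y : X, dist x y < δ → ∀ η : ℝ, 0 < η →
      ∃ (c : ℕ → X) (K : ℕ), c 0 = x ∧ (∀ r, K ≤ r → c r = y) ∧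
        (∀ r, dist (c r) (c (r + 1)) < η) ∧ (∀ r, dist (c r) x < ε) := by
  have hbasis := locallyConnectedSpace_iff_subsets_isOpen_isConnected.mp
    (inferInstance : LocallyConnectedSpace X)
  have hU : ∀ x : X, ∃ V : Set X, V ⊆ ball x (ε / 2) ∧ IsOpen V ∧ x ∈ V ∧ IsConnected V :=
    fun x => hbasis x _ (ball_mem_nhds x (by linarith))
  choose V hVsub hVopen hVmem hVconn using hU
  obtain ⟨δ, hδpos, hδ⟩ := lebesgue_number_lemma_of_metric (isCompact_univ (X := X))
    (fun x => hVopen x) (fun x _ => mem_iUnion.mpr ⟨x, hVmem x⟩)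
  refine ⟨min δ ε, lt_min hδpos hε, min_le_right _ _, ?_⟩
  intro x y hxy η hη
  obtain ⟨i, hi⟩ := hδ x (mem_univ x)
  have hxVi : x ∈ V i := hi (mem_ball_self hδpos)
  have hyVi : y ∈ V i := hi (by rw [mem_ball, dist_comm]; exact hxy.trans_le (min_le_left _ _))
  obtain ⟨c, K, h1, h2, h3, h4⟩ := hm_chain (hVconn i).isPreconnected hxVi hyVi hη
  refine ⟨c, K, h1, h2, h3, fun r => ?_⟩
  have h5 : c r ∈ ball i (ε / 2) := hVsub i (h4 r)
  have h6 : x ∈ ball i (ε / 2) := hVsub i hxVi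
  calc dist (c r) x ≤ dist (c r) i + dist i x := dist_triangle _ _ _
    _ < ε / 2 + ε / 2 := by
        rw [mem_ball] at h5 h6
        rw [dist_comm i x]
        exact add_lt_add h5 h6
    _ = ε := by ring

omit [LocallyConnectedSpace X] in
/-- Finite nets in a compact metric space. -/
lemma hm_net (δ : ℝ) (hδ : 0 < δ) : ∃ P : Finset X, ∀ x : X, ∃ p ∈ P, dist x p < δ := by
  obtain ⟨P, hP⟩ := (isCompact_univ (X := X)).elim_finite_subcover (fun x : X => ball x δ)
    (fun x => isOpen_ball) (fun x _ => mem_iUnion.mpr ⟨x, mem_ball_self hδ⟩)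
  refine ⟨P, fun x => ?_⟩
  obtain ⟨p, hp, hxp⟩ := by simpa [mem_iUnion] using hP (mem_univ x)
  exact ⟨p, hp, hxp⟩

section Glue

variable {X : Type*} [MetricSpace X]

/-- Concatenation of eventually-constant chains. -/
noncomputable def hmGlue (c : ℕ → X) (K : ℕ) (d : ℕ → X) : ℕ → X :=
  fun r => if r < K then c r else d (r - K)

lemma hmGlue_left {c : ℕ → X} {K : ℕ} {d : ℕ → X} {r : ℕ} (h : r < K) :
    hmGlue c K d r = c r := if_pos h

lemma hmGlue_right {c : ℕ → X} {K : ℕ} {d : ℕ → X} {r : ℕ} (h : K ≤ r) :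
    hmGlue c K d r = d (r - K) := if_neg (by omega)

lemma hmGlue_zero {c : ℕ → X} {K : ℕ} {d : ℕ → X} (hc : ∀ r, K ≤ r → c r = d 0) :
    hmGlue c K d 0 = c 0 := by
  rcases Nat.eq_zero_or_pos K with h | h
  · subst h
    rw [hmGlue_right le_rfl, hc 0 le_rfl]
  · exact hmGlue_left h

lemma hmGlue_mesh {c : ℕ → X} {K : ℕ} {d : ℕ → X} {η : ℝ}
    (hc : ∀ r, K ≤ r → c r = d 0)
    (hcm : ∀ r, dist (c r) (c (r + 1)) < η) (hdm : ∀ r, dist (d r) (d (r + 1)) < η) :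
    ∀ r, dist (hmGlue c K d r) (hmGlue c K d (r + 1)) < η := by
  intro r
  rcases lt_trichotomy (r + 1) K with h | h | h
  · rw [hmGlue_left (by omega), hmGlue_left h]
    exact hcm r
  · rw [hmGlue_left (by omega), hmGlue_right h.ge, h, Nat.sub_self, ← hc (r + 1) h.ge]
    exact hcm r
  · have hr : K ≤ r := by omega
    rw [hmGlue_right hr, hmGlue_right (by omega), show r + 1 - K = (r - K) + 1 by omega]
    exact hdm (r - K)

/-- Gap-filling lemma: between `δ`-close points `x, y` there is a fine chain staying
`2ε`-close to `x` which visits every point of a finite set of `δ`-close points. -/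
lemma hm_gap {ε δ : ℝ} (hε : 0 < ε) (hδε : δ ≤ ε)
    (hkey : ∀ x y : X, dist x y < δ → ∀ η : ℝ, 0 < η →
      ∃ (c : ℕ → X) (K : ℕ), c 0 = x ∧ (∀ r, K ≤ r → c r = y) ∧
        (∀ r, dist (c r) (c (r + 1)) < η) ∧ (∀ r, dist (c r) x < ε))
    {x y : X} (hxy : dist x y < δ) {η : ℝ} (hη : 0 < η) (P : Finset X)
    (hP : ∀ p ∈ P, dist x p < δ) :
    ∃ (h : ℕ → X) (K : ℕ), h 0 = x ∧ (∀ r, K ≤ r → h r = y) ∧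
      (∀ r, dist (h r) (h (r + 1)) < η) ∧ (∀ r, dist (h r) x < 2 * ε) ∧
      (∀ p ∈ P, ∃ r ≤ K, h r = p) := by
  classical
  induction P using Finset.induction_on with
  | empty =>
    obtain ⟨c, K, h1, h2, h3, h4⟩ := hkey x y hxy η hη
    exact ⟨c, K, h1, h2, h3, fun r => (h4 r).trans_le (by linarith), by simp⟩
  | @insert p P hp IH =>
    obtain ⟨h', K', hh1, hh2, hh3, hh4, hh5⟩ := IH fun q hq => hP q (Finset.mem_insert_of_mem hq)
    have hxp : dist x p < δ := hP p (Finset.mem_insert_self p P)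
    obtain ⟨c₁, K₁, hc11, hc12, hc13, hc14⟩ := hkey x p hxp η hη
    obtain ⟨c₂, K₂, hc21, hc22, hc23, hc24⟩ := hkey p x (by rwa [dist_comm]) η hη
    set g₁ : ℕ → X := hmGlue c₁ (K₁ + 1) c₂ with hg₁
    have hcc : ∀ r, K₁ + 1 ≤ r → c₁ r = c₂ 0 := fun r hr => by
      rw [hc12 r (by omega), hc21]
    have hg₁const : ∀ r, K₁ + 1 + (K₂ + 1) ≤ r → g₁ r = h' 0 := by
      intro r hr
      rw [hg₁, hmGlue_right (by omega), hc22 _ (by omega), hh1]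
    set g : ℕ → X := hmGlue g₁ (K₁ + 1 + (K₂ + 1)) h' with hg
    refine ⟨g, K₁ + 1 + (K₂ + 1) + K', ?_, ?_, ?_, ?_, ?_⟩
    · rw [hg, hmGlue_zero hg₁const, hg₁, hmGlue_zero hcc, hc11]
    · intro r hr
      rw [hg, hmGlue_right (by omega)]
      exact hh2 _ (by omega)
    · exact hmGlue_mesh hg₁const (hmGlue_mesh hcc hc13 hc23) hh3
    · intro r
      rw [hg]
      rcases lt_or_ge r (K₁ + 1 + (K₂ + 1)) with h | h
      · rw [hmGlue_left h, hg₁]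
        rcases lt_or_ge r (K₁ + 1) with h' | h'
        · rw [hmGlue_left h']
          exact (hc14 r).trans_le (by linarith)
        · rw [hmGlue_right h']
          calc dist (c₂ (r - (K₁ + 1))) x ≤ dist (c₂ (r - (K₁ + 1))) p + dist p x :=
                dist_triangle _ _ _
            _ < ε + δ := add_lt_add (hc24 _) (by rwa [dist_comm])
            _ ≤ 2 * ε := by linarith
      · rw [hmGlue_right h]
        exact hh4 _
    · intro q hq
      rcases Finset.mem_insert.mp hq with rfl | hq'
      · refine ⟨K₁ + 1, by omega, ?_⟩
        rw [hg, hmGlue_left (by omega), hg₁, hmGlue_right le_rfl, Nat.sub_self, hc21]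
      · obtain ⟨r, hr, hr'⟩ := hh5 q hq'
        refine ⟨K₁ + 1 + (K₂ + 1) + r, by omega, ?_⟩
        rw [hg, hmGlue_right (by omega), Nat.add_sub_cancel_left, hr']

end Glue

section Main

variable [CompactSpace X]

variable (X) in
/-- The modulus of uniform local connectedness. -/
noncomputable def hmDelta [CompactSpace X] [LocallyConnectedSpace X] (ε : ℝ) : ℝ :=
  if h : 0 < ε then (hm_key (X := X) ε h).choose else 1

variable [CompactSpace X] [LocallyConnectedSpace X]

lemma hmDelta_pos (ε : ℝ) : 0 < hmDelta X ε := by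
  rw [hmDelta]; split
  · exact (hm_key (X := X) ε ‹_›).choose_spec.1
  · exact one_pos

lemma hmDelta_le {ε : ℝ} (hε : 0 < ε) : hmDelta X ε ≤ ε := by
  rw [hmDelta, dif_pos hε]
  exact (hm_key (X := X) ε hε).choose_spec.2.1

lemma hmDelta_spec {ε : ℝ} (hε : 0 < ε) :
    ∀ x y : X, dist x y < hmDelta X ε → ∀ η : ℝ, 0 < η →
      ∃ (c : ℕ → X) (K : ℕ), c 0 = x ∧ (∀ r, K ≤ r → c r = y) ∧
        (∀ r, dist (c r) (c (r + 1)) < η) ∧ (∀ r, dist (c r) x < ε) := by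
  rw [hmDelta, dif_pos hε]
  exact (hm_key (X := X) ε hε).choose_spec.2.2

variable (X) in
/-- A stage of the space-filling construction: a chain on a dyadic grid whose mesh is
controlled and whose image is dense at scale `n`. -/
structure HMStage (n : ℕ) where
  M : ℕ
  g : ℕ → X
  mesh : ∀ q, dist (g q) (g (q + 1)) < hmDelta X ((1 / 2) ^ (n + 1))
  dense : ∀ x : X, ∃ j, j < 2 ^ M ∧ dist (g j) x < hmDelta X ((1 / 2) ^ (n + 1))
  pad : ∀ q, 2 ^ M ≤ q → g q = g (2 ^ M)

lemma hm_step (n : ℕ) (s : HMStage X n) :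
    ∃ (s' : HMStage X (n + 1)) (m : ℕ), s'.M = s.M + m ∧
      ∀ q, dist (s'.g q) (s.g (q / 2 ^ m)) ≤ 2 * (1 / 2) ^ (n + 1) := by
  classical
  set ε : ℝ := (1 / 2) ^ (n + 1) with hε_def
  have hε : 0 < ε := by positivity
  set δ : ℝ := hmDelta X ε with hδ_def
  set ε' : ℝ := (1 / 2) ^ (n + 2) with hε'_def
  have hε' : 0 < ε' := by positivity
  set δ' : ℝ := hmDelta X ε' with hδ'_def
  have hδ'pos : 0 < δ' := hmDelta_pos ε'
  obtain ⟨P, hPnet⟩ := hm_net (X := X) δ' hδ'pos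
  choose jf hjf1 hjf2 using s.dense
  -- chains for each gap
  have claim : ∀ j : ℕ, ∃ (h : ℕ → X) (K : ℕ), h 0 = s.g j ∧
      (∀ r, K ≤ r → h r = s.g (j + 1)) ∧ (∀ r, dist (h r) (h (r + 1)) < δ') ∧
      (∀ r, dist (h r) (s.g j) ≤ 2 * ε) ∧
      (∀ p ∈ P, jf p = j → ∃ r ≤ K, h r = p) ∧ (2 ^ s.M ≤ j → K = 0) := by
    intro j
    by_cases hj : j < 2 ^ s.M
    · obtain ⟨h, K, h1, h2, h3, h4, h5⟩ := hm_gap (X := X) hε (hmDelta_le hε)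
        (hmDelta_spec hε) (s.mesh j) hδ'pos (P.filter fun p => jf p = j)
        (fun p hp => by
          obtain ⟨_, hpj⟩ := Finset.mem_filter.mp hp
          rw [← hpj]; exact hjf2 p)
      exact ⟨h, K, h1, h2, h3, fun r => (h4 r).le,
        fun p hp hpj => h5 p (Finset.mem_filter.mpr ⟨hp, hpj⟩), fun hj' => absurd hj' (by omega)⟩
    · push_neg at hj
      have heq : s.g j = s.g (j + 1) := by rw [s.pad j hj, s.pad (j + 1) (by omega)]
      refine ⟨fun _ => s.g j, 0, rfl, fun r _ => heq, fun r => by simpa using hδ'pos,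
        fun r => by simp; positivity, fun p hp hpj => absurd (hjf1 p) (by omega), fun _ => rfl⟩
  choose h K h0 hconst hmesh hloc hvisit hK0 using claim
  set B : ℕ := (Finset.range (2 ^ s.M + 1)).sup K with hB
  have hKB : ∀ j, K j ≤ B := by
    intro j
    rcases lt_or_ge j (2 ^ s.M + 1) with hj | hj
    · exact Finset.le_sup (Finset.mem_range.mpr hj)
    · rw [hK0 j (by omega)]; exact Nat.zero_le _
  set m : ℕ := B + 1 with hm
  have h2m : ∀ j, K j + 1 ≤ 2 ^ m := by
    intro j
    have h1 : K j + 1 ≤ B + 1 := by have := hKB j; omega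
    have h2 : B + 1 ≤ 2 ^ m := by rw [hm]; exact (Nat.lt_two_pow_self (n := B + 1)).le
    omega
  have hmpos : 0 < 2 ^ m := pow_pos (by norm_num) m
  set g' : ℕ → X := fun q => h (q / 2 ^ m) (q % 2 ^ m) with hg'
  have hg'loc : ∀ q, dist (g' q) (s.g (q / 2 ^ m)) ≤ 2 * ε := fun q => hloc _ _
  -- value at multiples of 2^m
  have hg'mul : ∀ j, g' (2 ^ m * j) = s.g j := by
    intro j
    rw [hg']
    simp only [Nat.mul_div_cancel_left _ hmpos, Nat.mul_mod_right]
    exact h0 j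
  have hmesh' : ∀ q, dist (g' q) (g' (q + 1)) < δ' := by
    intro q
    set j := q / 2 ^ m with hj
    set r := q % 2 ^ m with hr
    have hrlt : r < 2 ^ m := Nat.mod_lt _ hmpos
    have hq : 2 ^ m * j + r = q := Nat.div_add_mod q (2 ^ m)
    rcases lt_or_ge (r + 1) (2 ^ m) with hcase | hcase
    · have e1 : (q + 1) / 2 ^ m = j := by
        rw [← hq, show 2 ^ m * j + r + 1 = 2 ^ m * j + (r + 1) by ring,
          Nat.mul_add_div hmpos, Nat.div_eq_of_lt hcase, add_zero]
      have e2 : (q + 1) % 2 ^ m = r + 1 := by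
        rw [← hq, show 2 ^ m * j + r + 1 = 2 ^ m * j + (r + 1) by ring,
          Nat.mul_add_mod, Nat.mod_eq_of_lt hcase]
      show dist (h j r) (h ((q+1)/2^m) ((q+1)%2^m)) < δ'
      rw [e1, e2]
      exact hmesh j r
    · have hre : r + 1 = 2 ^ m := by omega
      have e00 : q + 1 = 2 ^ m * j + 2 ^ m := by omega
      have e0 : q + 1 = 2 ^ m * (j + 1) := by rw [Nat.mul_add, mul_one]; exact e00
      have e3 : g' (q + 1) = s.g (j + 1) := by rw [e0, hg'mul]
      have e4 : g' q = s.g (j + 1) := by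
        show h j r = s.g (j + 1)
        exact hconst j r (by have := h2m j; omega)
      rw [e3, e4, dist_self]
      exact hδ'pos
  refine ⟨⟨s.M + m, g', hmesh', ?_, ?_⟩, m, rfl, hg'loc⟩
  · -- density
    intro x
    obtain ⟨p, hp, hxp⟩ := hPnet x
    obtain ⟨r, hrK, hrp⟩ := hvisit (jf p) p hp rfl
    have hrlt : r < 2 ^ m := by have := h2m (jf p); omega
    refine ⟨2 ^ m * jf p + r, ?_, ?_⟩
    · have h1 : jf p < 2 ^ s.M := hjf1 p
      calc 2 ^ m * jf p + r < 2 ^ m * jf p + 2 ^ m := by omega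
        _ = 2 ^ m * (jf p + 1) := by ring
        _ ≤ 2 ^ m * 2 ^ s.M := Nat.mul_le_mul_left _ (by omega)
        _ = 2 ^ (s.M + m) := by rw [← pow_add, add_comm]
    · show dist (h _ _) x < δ'
      rw [Nat.mul_add_div hmpos, Nat.div_eq_of_lt hrlt, add_zero,
        Nat.mul_add_mod, Nat.mod_eq_of_lt hrlt, hrp]
      rwa [dist_comm]
  · -- padding
    intro q hq
    have hj : 2 ^ s.M ≤ q / 2 ^ m := by
      rw [Nat.le_div_iff_mul_le hmpos]
      calc 2 ^ s.M * 2 ^ m = 2 ^ (s.M + m) := by rw [← pow_add]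
        _ ≤ q := hq
    have e1 : g' q = s.g (q / 2 ^ m + 1) := by
      show h _ _ = _
      exact hconst _ _ (by rw [hK0 _ hj]; omega)
    have e2 : g' (2 ^ (s.M + m)) = s.g (2 ^ s.M) := by
      rw [show (2 : ℕ) ^ (s.M + m) = 2 ^ m * 2 ^ s.M by rw [← pow_add, add_comm], hg'mul]
    rw [e1, e2, s.pad _ (by omega)]


variable [ConnectedSpace X] [Nonempty X]

lemma hm_base : Nonempty (HMStage X 0) := by
  classical
  set D : ℝ := Metric.diam (univ : Set X) with hD
  have hDb : Bornology.IsBounded (univ : Set X) := isCompact_univ.isBounded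
  have hε₀ : (0 : ℝ) < D + 1 := by have := Metric.diam_nonneg (s := (univ : Set X)); linarith
  have hkey0 : ∀ x y : X, dist x y < D + 1 → ∀ η : ℝ, 0 < η →
      ∃ (c : ℕ → X) (K : ℕ), c 0 = x ∧ (∀ r, K ≤ r → c r = y) ∧
        (∀ r, dist (c r) (c (r + 1)) < η) ∧ (∀ r, dist (c r) x < D + 1) := by
    intro x y _ η hη
    obtain ⟨c, K, h1, h2, h3, h4⟩ := hm_chain isPreconnected_univ (mem_univ x) (mem_univ y) hη
    refine ⟨c, K, h1, h2, h3, fun r => ?_⟩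
    have := Metric.dist_le_diam_of_mem hDb (mem_univ (c r)) (mem_univ x)
    linarith
  set x₀ : X := Classical.arbitrary X
  set δ₁ : ℝ := hmDelta X ((1 / 2) ^ (0 + 1)) with hδ₁
  have hδ₁pos : 0 < δ₁ := hmDelta_pos _
  obtain ⟨P, hPnet⟩ := hm_net (X := X) δ₁ hδ₁pos
  obtain ⟨h, K, h1, h2, h3, _, h5⟩ := hm_gap hε₀ le_rfl hkey0
    (show dist x₀ x₀ < D + 1 by simpa using hε₀) hδ₁pos P
    (fun p _ => by
      have := Metric.dist_le_diam_of_mem hDb (mem_univ x₀) (mem_univ p)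
      linarith)
  have hK2 : K < 2 ^ K := Nat.lt_two_pow_self
  refine ⟨⟨K, h, h3, ?_, ?_⟩⟩
  · intro x
    obtain ⟨p, hp, hxp⟩ := hPnet x
    obtain ⟨r, hrK, hrp⟩ := h5 p hp
    exact ⟨r, by omega, by rw [hrp, dist_comm]; exact hxp⟩
  · intro q hq
    rw [h2 q (by omega), h2 (2 ^ K) (by omega)]

variable (X) in
noncomputable def hmTower : (n : ℕ) → HMStage X n
  | 0 => Classical.choice hm_base
  | n + 1 => (hm_step n (hmTower n)).choose

lemma hmTower_succ (n : ℕ) : ∃ m : ℕ, (hmTower X (n + 1)).M = (hmTower X n).M + m ∧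
    ∀ q, dist ((hmTower X (n + 1)).g q) ((hmTower X n).g (q / 2 ^ m)) ≤ 2 * (1 / 2) ^ (n + 1) := by
  obtain ⟨m, hm1, hm2⟩ := (hm_step n (hmTower X n)).choose_spec
  exact ⟨m, by rw [hmTower]; exact hm1, by rw [hmTower]; exact hm2⟩

lemma hm_main : ∃ f : C(unitInterval, X), Function.Surjective f := by
  classical
  set Mn : ℕ → ℕ := fun n => (hmTower X n).M with hMn
  set u : unitInterval → ℕ → X :=
    fun t n => (hmTower X n).g ⌊(t : ℝ) * 2 ^ Mn n⌋₊ with hu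
  have hstep : ∀ t : unitInterval, ∀ n, dist (u t n) (u t (n + 1)) ≤ 1 * (1 / 2) ^ n := by
    intro t n
    obtain ⟨m, hm1, hm2⟩ := hmTower_succ (X := X) n
    have hfl : ⌊(t : ℝ) * 2 ^ Mn n⌋₊ = ⌊(t : ℝ) * 2 ^ Mn (n + 1)⌋₊ / 2 ^ m := by
      rw [← Nat.floor_div_natCast]
      congr 1
      rw [show Mn (n + 1) = Mn n + m from hm1, pow_add]
      push_cast
      field_simp
    rw [hu]
    simp only []
    rw [hfl, dist_comm]
    calc dist ((hmTower X (n+1)).g ⌊(t : ℝ) * 2 ^ Mn (n+1)⌋₊)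
          ((hmTower X n).g (⌊(t : ℝ) * 2 ^ Mn (n+1)⌋₊ / 2 ^ m)) ≤ 2 * (1 / 2) ^ (n + 1) :=
        hm2 _
      _ = 1 * (1 / 2) ^ n := by ring
  have hrlt : (1 / 2 : ℝ) < 1 := by norm_num
  have hF0 : ∀ t : unitInterval, ∃ a : X, Tendsto (u t) atTop (𝓝 a) := fun t =>
    cauchySeq_tendsto_of_complete (cauchySeq_of_le_geometric (1 / 2) 1 hrlt (hstep t))
  choose F hF using hF0
  have hdistF : ∀ t : unitInterval, ∀ n, dist (u t n) (F t) ≤ 2 * (1 / 2) ^ n := by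
    intro t n
    have := dist_le_of_le_geometric_of_tendsto (1 / 2) 1 hrlt (hstep t) (hF t) n
    calc dist (u t n) (F t) ≤ 1 * (1 / 2 : ℝ) ^ n / (1 - 1 / 2) := this
      _ = 2 * (1 / 2) ^ n := by ring
  -- modulus of continuity at stage n
  have hmod : ∀ s t : unitInterval, ∀ n, |(s : ℝ) - t| ≤ (1 / 2) ^ Mn n →
      dist (u s n) (u t n) ≤ (1 / 2) ^ (n + 1) := by
    intro s t n hst
    have h2M : (0 : ℝ) < 2 ^ Mn n := by positivity
    have hs0 : (0 : ℝ) ≤ (s : ℝ) * 2 ^ Mn n := mul_nonneg s.2.1 h2M.le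
    have ht0 : (0 : ℝ) ≤ (t : ℝ) * 2 ^ Mn n := mul_nonneg t.2.1 h2M.le
    have hab : |(s : ℝ) * 2 ^ Mn n - (t : ℝ) * 2 ^ Mn n| ≤ 1 := by
      rw [← sub_mul, abs_mul, abs_of_pos h2M]
      calc |(s : ℝ) - t| * 2 ^ Mn n ≤ (1 / 2) ^ Mn n * 2 ^ Mn n :=
            mul_le_mul_of_nonneg_right hst h2M.le
        _ = 1 := by rw [← mul_pow]; norm_num
    set a : ℝ := (s : ℝ) * 2 ^ Mn n
    set b : ℝ := (t : ℝ) * 2 ^ Mn n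
    have h1 : ⌊a⌋₊ ≤ ⌊b⌋₊ + 1 := by
      have : a ≤ b + 1 := by cases abs_le.mp hab; linarith
      calc ⌊a⌋₊ ≤ ⌊b + 1⌋₊ := Nat.floor_le_floor this
        _ = ⌊b⌋₊ + 1 := Nat.floor_add_one ht0
    have h2 : ⌊b⌋₊ ≤ ⌊a⌋₊ + 1 := by
      have : b ≤ a + 1 := by cases abs_le.mp hab; linarith
      calc ⌊b⌋₊ ≤ ⌊a + 1⌋₊ := Nat.floor_le_floor this
        _ = ⌊a⌋₊ + 1 := Nat.floor_add_one hs0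
    have hmesh := (hmTower X n).mesh
    have hδε : hmDelta X ((1 / 2) ^ (n + 1)) ≤ (1 / 2) ^ (n + 1) :=
      hmDelta_le (by positivity)
    show dist ((hmTower X n).g ⌊a⌋₊) ((hmTower X n).g ⌊b⌋₊) ≤ (1 / 2) ^ (n + 1)
    rcases show ⌊b⌋₊ = ⌊a⌋₊ ∨ ⌊b⌋₊ = ⌊a⌋₊ + 1 ∨ ⌊a⌋₊ = ⌊b⌋₊ + 1 by omega with he | he | he
    · rw [he, dist_self]; positivity
    · rw [he]; exact ((hmesh ⌊a⌋₊).trans_le hδε).le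
    · rw [he, dist_comm]; exact ((hmesh ⌊b⌋₊).trans_le hδε).le
  have hFcont : Continuous F := by
    rw [Metric.continuous_iff]
    intro t ε hε
    obtain ⟨n, hn⟩ := exists_pow_lt_of_lt_one (show (0:ℝ) < ε / 5 by linarith) hrlt
    refine ⟨(1 / 2) ^ Mn n, by positivity, fun s hs => ?_⟩
    have hst : |(s : ℝ) - t| ≤ (1 / 2) ^ Mn n := by
      rw [Subtype.dist_eq, Real.dist_eq] at hs
      exact hs.le
    calc dist (F s) (F t) ≤ dist (F s) (u s n) + dist (u s n) (u t n) + dist (u t n) (F t) :=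
          dist_triangle4 _ _ _ _
      _ ≤ 2 * (1 / 2) ^ n + (1 / 2) ^ (n + 1) + 2 * (1 / 2) ^ n := by
          have := hdistF s n
          have := hdistF t n
          have := hmod s t n hst
          rw [dist_comm (F s) (u s n)]
          linarith
      _ ≤ 5 * (1 / 2) ^ n := by
          rw [pow_succ]
          linarith [pow_nonneg (show (0:ℝ) ≤ 1/2 by norm_num) n]
      _ < ε := by linarith
  refine ⟨⟨F, hFcont⟩, fun x => ?_⟩
  have hdense : ∀ n, ∃ j, j < 2 ^ Mn n ∧
      dist ((hmTower X n).g j) x < hmDelta X ((1 / 2) ^ (n + 1)) := fun n =>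
    (hmTower X n).dense x
  choose jn hjn1 hjn2 using hdense
  have htm : ∀ n, (jn n : ℝ) / 2 ^ Mn n ∈ unitInterval := by
    intro n
    constructor
    · positivity
    · rw [div_le_one (by positivity)]
      calc (jn n : ℝ) ≤ 2 ^ Mn n := by exact_mod_cast (hjn1 n).le
        _ = 2 ^ Mn n := by norm_num
  set tseq : ℕ → unitInterval := fun n => ⟨(jn n : ℝ) / 2 ^ Mn n, htm n⟩ with htseq
  have hut : ∀ n, u (tseq n) n = (hmTower X n).g (jn n) := by
    intro n
    show (hmTower X n).g ⌊((jn n : ℝ) / 2 ^ Mn n) * 2 ^ Mn n⌋₊ = _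
    rw [div_mul_cancel₀ _ (show (2:ℝ) ^ Mn n ≠ 0 by positivity), Nat.floor_natCast]
  have hclose : ∀ n, dist (F (tseq n)) x ≤ 3 * (1 / 2) ^ n := by
    intro n
    have h1 : dist (u (tseq n) n) x ≤ (1 / 2) ^ (n + 1) := by
      rw [hut n]
      exact (hjn2 n).le.trans (hmDelta_le (by positivity))
    calc dist (F (tseq n)) x ≤ dist (F (tseq n)) (u (tseq n) n) + dist (u (tseq n) n) x :=
          dist_triangle _ _ _
      _ ≤ 2 * (1 / 2) ^ n + (1 / 2) ^ (n + 1) := by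
          rw [dist_comm]
          linarith [hdistF (tseq n) n]
      _ ≤ 3 * (1 / 2) ^ n := by
          rw [pow_succ]
          linarith [pow_nonneg (show (0:ℝ) ≤ 1/2 by norm_num) n]
  obtain ⟨a, φ, hφ, hconv⟩ := CompactSpace.tendsto_subseq tseq
  refine ⟨a, ?_⟩
  have h1 : Tendsto (fun k => F (tseq (φ k))) atTop (𝓝 (F a)) :=
    (hFcont.tendsto a).comp hconv
  have h2 : Tendsto (fun k => F (tseq (φ k))) atTop (𝓝 x) := by
    rw [tendsto_iff_dist_tendsto_zero]
    refine squeeze_zero (g := fun k => 3 * (1 / 2 : ℝ) ^ k) (fun k => dist_nonneg)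
      (fun k => ?_) ?_
    swap
    · have : Tendsto (fun k : ℕ => (1 / 2 : ℝ) ^ k) atTop (𝓝 0) :=
        tendsto_pow_atTop_nhds_zero_of_lt_one (by norm_num) hrlt
      simpa using this.const_mul 3
    · calc dist (F (tseq (φ k))) x ≤ 3 * (1 / 2) ^ (φ k) := hclose (φ k)
        _ ≤ 3 * (1 / 2) ^ k := by
            have h3 : (1 / 2 : ℝ) ^ (φ k) ≤ (1 / 2) ^ k :=
              pow_le_pow_of_le_one (by norm_num) (by norm_num) (hφ.le_apply)
            linarith
  show F a = x
  exact tendsto_nhds_unique h1 h2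


end Main
end HM

/-- The Hahn–Mazurkiewicz theorem: every Peano continuum (nonempty, compact, connected,
locally connected, metrizable space) is a continuous image of the unit interval. -/
theorem stmt_16 {X : Type*} [TopologicalSpace X] [Nonempty X] [CompactSpace X]
    [ConnectedSpace X] [LocallyConnectedSpace X] [TopologicalSpace.MetrizableSpace X] :
    ∃ f : C(unitInterval, X), Function.Surjective f := by
  letI : MetricSpace X := TopologicalSpace.metrizableSpaceMetric X
  exact hm_main
end

section
/- Let X be a compact Hausdorff space and M a closed unital star-subalgebra of C(X, ℂ). Then M is isometrically star-isomorphic to C(Y, ℂ) for some compact Hausdorff space Y that is a continuous image of X; in particular, the restriction map from X to the character space of M is a continuous surjection. -/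
universe u
set_option maxHeartbeats 1000000
open WeakDual WeakDual.CharacterSpace

theorem stmt_19 {X : Type u} [TopologicalSpace X] [CompactSpace X] [T2Space X]
    (M : StarSubalgebra ℂ C(X, ℂ)) (hM : IsClosed (M : Set C(X, ℂ))) :
    (∃ (Y : Type u) (_ : TopologicalSpace Y) (_ : CompactSpace Y) (_ : T2Space Y),
        (∃ q : C(X, Y), Function.Surjective q) ∧
        ∃ e : M ≃⋆ₐ[ℂ] C(Y, ℂ), Isometry e) ∧
      ∃ r : X → WeakDual.characterSpace ℂ M, Continuous r ∧ Function.Surjective r ∧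
        ∀ (x : X) (m : M), r x m = (m : C(X, ℂ)) x := by
  haveI : CompleteSpace M := hM.completeSpace_coe
  haveI : IsClosed (M : Set C(X, ℂ)) := hM
  -- the restriction map
  set r : C(X, characterSpace ℂ M) :=
    (compContinuousMap (M.subtype)).comp (homeoEval X ℂ : C(X, characterSpace ℂ C(X, ℂ)))
    with hr
  have hr_apply : ∀ (x : X) (m : M), r x m = (m : C(X, ℂ)) x := fun x m => rfl
  -- surjectivity of r
  have hr_surj : Function.Surjective r := by
    intro φ
    -- find a common zero of ker φ
    have key : ∃ x : X, ∀ m : M, φ m = 0 → (m : C(X, ℂ)) x = 0 := by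
      by_contra h
      push_neg at h
      -- cover X by nonvanishing sets of kernel elements
      set I := {m : M // φ m = 0}
      have hcov : (Set.univ : Set X) ⊆ ⋃ i : I, {y | ((i : M) : C(X, ℂ)) y ≠ 0} := by
        intro x _
        obtain ⟨m, hm0, hmx⟩ := h x
        exact Set.mem_iUnion.mpr ⟨⟨m, hm0⟩, hmx⟩
      obtain ⟨t, ht⟩ := isCompact_univ.elim_finite_subcover
        (fun i : I => {y | ((i : M) : C(X, ℂ)) y ≠ 0})
        (fun i => (isClosed_eq ((i : M) : C(X, ℂ)).continuous continuous_const).isOpen_compl) hcov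
      set g : M := ∑ i ∈ t, star (i : M) * (i : M) with hg
      have hφg : φ g = 0 := by
        rw [hg, map_sum]
        refine Finset.sum_eq_zero fun i _ => ?_
        rw [map_mul]
        simp [i.2]
      have hgne : ∀ y : X, (g : C(X, ℂ)) y ≠ 0 := by
        intro y
        obtain ⟨i, hi, hiy⟩ := Set.mem_iUnion₂.mp (ht (Set.mem_univ y))
        have : (g : C(X, ℂ)) y = ∑ i ∈ t, ((Complex.normSq (((i : M) : C(X, ℂ)) y) : ℂ)) := by
          push_cast [hg]
          simp only [ContinuousMap.coe_sum, ContinuousMap.coe_mul, Finset.sum_apply,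
            ContinuousMap.mul_apply, ContinuousMap.coe_star, ContinuousMap.star_apply,
            Complex.star_def, Complex.normSq_eq_conj_mul_self]
          refine Finset.sum_congr rfl fun j _ => ?_
          simp [Complex.normSq_eq_conj_mul_self]
        rw [this]
        rw [← Complex.ofReal_sum]
        simp only [ne_eq, Complex.ofReal_eq_zero]
        have hpos : 0 < ∑ j ∈ t, Complex.normSq (((j : M) : C(X, ℂ)) y) :=
          Finset.sum_pos' (fun j _ => Complex.normSq_nonneg _)
            ⟨i, hi, by simpa [Complex.normSq_pos] using hiy⟩
        exact ne_of_gt hpos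
      -- g is invertible in C(X, ℂ), hence in M, contradicting φ g = 0
      have hgu : IsUnit (g : C(X, ℂ)) := by
        rw [ContinuousMap.isUnit_iff_forall_ne_zero]
        exact hgne
      have hgu' : IsUnit g := (StarSubalgebra.coe_isUnit M).mp hgu
      obtain ⟨u, hu⟩ := hgu'
      have : φ ((u * u⁻¹ : Mˣ) : M) = 1 := by
        rw [mul_inv_cancel, Units.val_one]
        exact map_one (equivAlgHom φ)
      rw [Units.val_mul, map_mul, hu, hφg, zero_mul] at this
      exact zero_ne_one this
    obtain ⟨x, hx⟩ := key
    refine ⟨x, ?_⟩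
    ext m
    have h0 : φ (m - algebraMap ℂ M (φ m)) = 0 := by
      rw [map_sub]
      have : φ (algebraMap ℂ M (φ m)) = φ m := by
        have h1 : φ (1 : M) = 1 := map_one (equivAlgHom φ)
        rw [Algebra.algebraMap_eq_smul_one, map_smul, h1, smul_eq_mul, mul_one]
      rw [this, sub_self]
    have := hx _ h0
    have hcoe : ((m - algebraMap ℂ M (φ m) : M) : C(X, ℂ)) x
        = (m : C(X, ℂ)) x - φ m := by
      push_cast
      simp [Algebra.algebraMap_eq_smul_one]
    rw [hcoe] at this
    have := sub_eq_zero.mp this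
    rw [hr_apply x m, this]
  refine ⟨⟨characterSpace ℂ M, inferInstance, inferInstance, inferInstance,
    ⟨r, hr_surj⟩, gelfandStarTransform M, gelfandTransform_isometry M⟩,
    r, r.continuous, hr_surj, hr_apply⟩
end
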